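/- (Proposition 1) Let G be the communication graph of n robots with positions p_1,…,p_n ∈ ℝ^m and communication range R, with leader set L = {1,…,l} and follower set F = {l+1,…,n}. Let δ be a positive integer with δ ≤ |F|, and let the smoothed bootstrap-percolation values \bar π_j(k) be computed with parameters s, s_A > 0 and q, q_A ∈ (0,1). If \bar π_j(δ) ≥ 0 for every follower j ∈ F, then G is strongly r-robust with respect to L. -/
import Mathlib


open scoped BigOperators

/-- The parametrized sigmoid function σ_{s,q}(y) = (1+q)/(1 + q⁻¹ e^{-s y}) − q. -/
noncomputable def sigmaFn (s q y : ℝ) : ℝ :=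
  (1 + q) / (1 + q⁻¹ * Real.exp (-(s * y))) - q

/-- Smoothed adjacency entry: `σ_{s_A,q_A}((R² − Δ_{ij}²)³)` if `i ≠ j` and `Δ_{ij} < R`,
and `0` otherwise. -/
noncomputable def barAdj (sA qA R : ℝ) {n m : ℕ} (p : Fin n → EuclideanSpace ℝ (Fin m))
    (i j : Fin n) : ℝ :=
  if i ≠ j ∧ dist (p i) (p j) < R then
    sigmaFn sA qA ((R ^ 2 - dist (p i) (p j) ^ 2) ^ 3)
  else 0

/-- Exact bootstrap-percolation values: leaders `j < l` start at `1`, followers start at `0`;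
`π_j(k+1) = 1` iff `π_j(k) = 1` or the sum of `π_i(k)` over neighbors `i` of `j` is `≥ r`. -/
noncomputable def piExact (R : ℝ) {n m : ℕ} (p : Fin n → EuclideanSpace ℝ (Fin m))
    (l r : ℕ) : ℕ → Fin n → ℝ
  | 0 => fun j => if (j : ℕ) < l then 1 else 0
  | k + 1 => fun j =>
      if piExact R p l r k j = 1 ∨
          (r : ℝ) ≤ ∑ i ∈ Finset.univ.filter (fun i => i ≠ j ∧ dist (p i) (p j) < R),
            piExact R p l r k i
      then 1 else 0

/-- Smoothed bootstrap-percolation values: leaders `j < l` are pinned at `1`; each follower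
`j` updates via `σ_{s,q}(∑_i \bar a_{ij} ⋅ \bar π_i(k) − r)` (leaders contributing
`\bar a_{ij} ⋅ 1`). -/
noncomputable def piBar (s q sA qA R : ℝ) {n m : ℕ} (p : Fin n → EuclideanSpace ℝ (Fin m))
    (l r : ℕ) : ℕ → Fin n → ℝ
  | 0 => fun j => if (j : ℕ) < l then 1 else 0
  | k + 1 => fun j =>
      if (j : ℕ) < l then 1
      else sigmaFn s q ((∑ i, barAdj sA qA R p i j * piBar s q sA qA R p l r k i) - r)

/-- Neighbor set of `j` in the distance-based communication graph. -/
noncomputable def nbrFinset (R : ℝ) {n m : ℕ} (p : Fin n → EuclideanSpace ℝ (Fin m))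
    (i : Fin n) : Finset (Fin n) :=
  Finset.univ.filter (fun j => j ≠ i ∧ dist (p i) (p j) < R)

lemma sigma_lt_one {s q y : ℝ} (hq : 0 < q) : sigmaFn s q y < 1 := by
  unfold sigmaFn
  have hE := Real.exp_pos (-(s * y))
  have hi : 0 < q⁻¹ := inv_pos.mpr hq
  have hD : (0:ℝ) < 1 + q⁻¹ * Real.exp (-(s * y)) := by positivity
  rw [sub_lt_iff_lt_add, div_lt_iff₀ hD]
  nlinarith [mul_pos hi hE]

lemma sigma_neg {s q y : ℝ} (hq : 0 < q) (hs : 0 < s) (hy : y < 0) :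
    sigmaFn s q y < 0 := by
  unfold sigmaFn
  have hE : 1 < Real.exp (-(s * y)) := by
    rw [show (1:ℝ) = Real.exp 0 from (Real.exp_zero).symm]
    exact Real.exp_lt_exp.mpr (by nlinarith)
  have hi : 0 < q⁻¹ := inv_pos.mpr hq
  have hD : (0:ℝ) < 1 + q⁻¹ * Real.exp (-(s * y)) := by positivity
  have h1 : q * q⁻¹ = 1 := mul_inv_cancel₀ hq.ne'
  rw [sub_neg, div_lt_iff₀ hD]
  nlinarith

lemma sigma_nonneg {s q y : ℝ} (hq : 0 < q) (hs : 0 < s) (hy : 0 ≤ y) :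
    0 ≤ sigmaFn s q y := by
  unfold sigmaFn
  have hE : Real.exp (-(s * y)) ≤ 1 := by
    rw [show (1:ℝ) = Real.exp 0 from (Real.exp_zero).symm]
    exact Real.exp_le_exp.mpr (by nlinarith)
  have hi : 0 < q⁻¹ := inv_pos.mpr hq
  have hD : (0:ℝ) < 1 + q⁻¹ * Real.exp (-(s * y)) := by positivity
  have h1 : q * q⁻¹ = 1 := mul_inv_cancel₀ hq.ne'
  rw [sub_nonneg, le_div_iff₀ hD]
  nlinarith

lemma barAdj_nonneg {sA qA R : ℝ} {n m : ℕ} {p : Fin n → EuclideanSpace ℝ (Fin m)}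
    (hsA : 0 < sA) (hqA : 0 < qA) (i j : Fin n) : 0 ≤ barAdj sA qA R p i j := by
  unfold barAdj
  split_ifs with h
  · apply sigma_nonneg hqA hsA
    have hd : 0 ≤ dist (p i) (p j) := dist_nonneg
    have h2 : (0:ℝ) < R ^ 2 - dist (p i) (p j) ^ 2 := by nlinarith [h.2]
    exact (pow_pos h2 3).le
  · exact le_rfl

lemma barAdj_le_one {sA qA R : ℝ} {n m : ℕ} {p : Fin n → EuclideanSpace ℝ (Fin m)}
    (hqA : 0 < qA) (i j : Fin n) : barAdj sA qA R p i j ≤ 1 := by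
  unfold barAdj
  split_ifs with h
  · exact (sigma_lt_one hqA).le
  · norm_num

lemma piBar_le_one {s q sA qA R : ℝ} {n m : ℕ} {p : Fin n → EuclideanSpace ℝ (Fin m)}
    {l r : ℕ} (hq : 0 < q) : ∀ k (j : Fin n), piBar s q sA qA R p l r k j ≤ 1 := by
  intro k
  induction k with
  | zero => intro j; simp only [piBar]; split_ifs <;> norm_num
  | succ k ih =>
    intro j
    simp only [piBar]
    split_ifs with h
    · exact le_rfl
    · exact (sigma_lt_one hq).le

theorem stmt_11 {n m : ℕ} (l r δ : ℕ) (hl : 0 < l) (hln : l ≤ n) (hr : 0 < r)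
    (hδ1 : 1 ≤ δ) (hδf : δ ≤ n - l)
    (R s q sA qA : ℝ) (hR : 0 < R) (hs : 0 < s) (hq0 : 0 < q) (hq1 : q < 1)
    (hsA : 0 < sA) (hqA0 : 0 < qA) (hqA1 : qA < 1)
    (p : Fin n → EuclideanSpace ℝ (Fin m))
    (hpos : ∀ j : Fin n, l ≤ (j : ℕ) → 0 ≤ piBar s q sA qA R p l r δ j) :
    -- `G` is strongly `r`-robust with respect to `L = {j : j < l}`: every nonempty
    -- subset `S` of followers is `r`-reachable.
    ∀ S : Finset (Fin n), (∀ j ∈ S, l ≤ (j : ℕ)) → S.Nonempty →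
      ∃ i ∈ S, r ≤ (nbrFinset R p i \ S).card := by
  intro S hS hSne
  by_contra hcon
  push_neg at hcon
  -- key step: if all values in S are ≤ 0 at step k, they are < 0 at step k+1
  have key : ∀ k, (∀ i ∈ S, piBar s q sA qA R p l r k i ≤ 0) →
      ∀ j ∈ S, piBar s q sA qA R p l r (k + 1) j < 0 := by
    intro k hk j hj
    have hjl : ¬ ((j : ℕ) < l) := not_lt.mpr (hS j hj)
    simp only [piBar, if_neg hjl]
    apply sigma_neg hq0 hs
    have hsum : ∑ i, barAdj sA qA R p i j * piBar s q sA qA R p l r k i ≤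
        ((nbrFinset R p j \ S).card : ℝ) := by
      calc ∑ i, barAdj sA qA R p i j * piBar s q sA qA R p l r k i
          ≤ ∑ i, (if i ∈ nbrFinset R p j \ S then (1:ℝ) else 0) := by
            apply Finset.sum_le_sum
            intro i _
            by_cases hiS : i ∈ S
            · have : i ∉ nbrFinset R p j \ S := fun h => (Finset.mem_sdiff.mp h).2 hiS
              rw [if_neg this]
              exact mul_nonpos_of_nonneg_of_nonpos (barAdj_nonneg hsA hqA0 i j) (hk i hiS)
            · by_cases hin : i ∈ nbrFinset R p j
              · rw [if_pos (Finset.mem_sdiff.mpr ⟨hin, hiS⟩)]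
                calc barAdj sA qA R p i j * piBar s q sA qA R p l r k i
                    ≤ barAdj sA qA R p i j * 1 :=
                      mul_le_mul_of_nonneg_left (piBar_le_one hq0 k i)
                        (barAdj_nonneg hsA hqA0 i j)
                  _ = barAdj sA qA R p i j := mul_one _
                  _ ≤ 1 := barAdj_le_one hqA0 i j
              · have hz : barAdj sA qA R p i j = 0 := by
                  unfold barAdj
                  rw [if_neg]
                  intro hcond
                  apply hin
                  simp only [nbrFinset, Finset.mem_filter, Finset.mem_univ, true_and]
                  exact ⟨hcond.1, by rw [dist_comm]; exact hcond.2⟩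
                have : i ∉ nbrFinset R p j \ S := fun h => hin (Finset.mem_sdiff.mp h).1
                rw [if_neg this, hz, zero_mul]
        _ = ((nbrFinset R p j \ S).card : ℝ) := by
            rw [Finset.sum_ite_mem, Finset.univ_inter, Finset.sum_const, nsmul_eq_mul,
              mul_one]
    have hcard : ((nbrFinset R p j \ S).card : ℝ) ≤ (r : ℝ) - 1 := by
      have h1 : (nbrFinset R p j \ S).card + 1 ≤ r := hcon j hj
      have := (Nat.cast_le (α := ℝ)).mpr h1
      push_cast at this
      linarith
    linarith
  -- all values in S stay ≤ 0
  have hle : ∀ k, ∀ i ∈ S, piBar s q sA qA R p l r k i ≤ 0 := by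
    intro k
    induction k with
    | zero =>
      intro i hi
      simp only [piBar, if_neg (not_lt.mpr (hS i hi))]
      exact le_rfl
    | succ k ih => intro i hi; exact (key k ih i hi).le
  obtain ⟨k, rfl⟩ : ∃ k, δ = k + 1 := ⟨δ - 1, (Nat.succ_pred_eq_of_pos hδ1).symm⟩
  obtain ⟨j, hj⟩ := hSne
  have h1 := key k (hle k) j hj
  have h2 := hpos j (hS j hj)
  linarith
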